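/- arXiv:2010.08855 — 3 statements merged into one kernel-verified Lean document; each statement's English description precedes it below -/
import Mathlib

section
/- Let F be a field, n a positive integer, and D a nonzero n × n matrix over F. Let S be a nonempty finite subset of F with |S| = s. Then the number of vectors r ∈ Sⁿ (i.e., functions from Fin n to S) satisfying D · r = 0 is at most s^(n−1). -/
/-!
Some row `a` of `D` is nonzero, say `a j ≠ 0`, and every solution of `D r = 0` solves
`a ⬝ᵥ r = 0`. Two solutions of that single equation which agree off `j` differ by
`Pi.single j c` with `a j * c = 0`, so `c = 0`: forgetting coordinate `j` is injective on them,
which leaves at most `s ^ (n - 1)` possibilities.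
-/

open Finset Matrix

section

variable {ι R : Type*} [Fintype ι] [DecidableEq ι] [Ring R] [NoZeroDivisors R]

theorem Matrix.injOn_restrict_ne_of_dotProduct_eq_zero {a : ι → R} {j : ι} (hj : a j ≠ 0) :
    Set.InjOn (fun (r : ι → R) (k : {k // k ≠ j}) => r k) {r | a ⬝ᵥ r = 0} := by
  intro r hr r' hr' hrestrict
  have hoff : ∀ k ≠ j, r k = r' k := fun k hk => congrFun hrestrict ⟨k, hk⟩
  have hdiff : r - r' = Pi.single j (r j - r' j) := by
    ext k
    by_cases hk : k = j
    · subst hk; simp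
    · simp [hk, hoff k hk]
  have hzero : a j * (r j - r' j) = 0 := by
    rw [← dotProduct_single, ← hdiff, dotProduct_sub, hr, hr', sub_zero]
  have hj' : r j - r' j = 0 := (mul_eq_zero.mp hzero).resolve_left hj
  rw [hj', Pi.single_zero] at hdiff
  exact sub_eq_zero.mp hdiff

theorem Matrix.card_filter_dotProduct_eq_zero_le [DecidableEq R] {a : ι → R} (ha : a ≠ 0)
    (S : Finset R) :
    ((Fintype.piFinset fun _ : ι => S).filter fun r => a ⬝ᵥ r = 0).card ≤
      S.card ^ (Fintype.card ι - 1) := by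
  obtain ⟨j, hj⟩ : ∃ j, a j ≠ 0 := Function.ne_iff.mp ha
  calc ((Fintype.piFinset fun _ : ι => S).filter fun r => a ⬝ᵥ r = 0).card
      ≤ (Fintype.piFinset fun _ : {k // k ≠ j} => S).card := by
        refine card_le_card_of_injOn (fun r (k : {k // k ≠ j}) => r k) ?_ ?_
        · intro r hr
          simp only [coe_filter, Fintype.mem_piFinset, Set.mem_ofPred_eq] at hr
          simpa using fun k _ => hr.1 k
        · exact (injOn_restrict_ne_of_dotProduct_eq_zero hj).mono fun r hr => by
            simp only [coe_filter, Set.mem_ofPred_eq] at hr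
            exact hr.2
    _ = S.card ^ (Fintype.card ι - 1) := by
        simp [Fintype.card_subtype_compl]

end

theorem freivalds_counting_general
    (F : Type*) [Field F] [DecidableEq F]
    (n : ℕ)
    (D : Matrix (Fin n) (Fin n) F) (hD : D ≠ 0)
    (S : Finset F) (s : ℕ) (hs : S.card = s) :
    ((Fintype.piFinset fun _ : Fin n => S).filter
        fun r => D.mulVec r = 0).card ≤ s ^ (n - 1) := by
  obtain ⟨i, hi⟩ : ∃ i, D i ≠ 0 := Function.ne_iff.mp hD
  have hsub : (Fintype.piFinset fun _ : Fin n => S).filter (fun r => D *ᵥ r = 0) ⊆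
      (Fintype.piFinset fun _ : Fin n => S).filter (fun r => D i ⬝ᵥ r = 0) :=
    fun r => by
      simp only [mem_filter]
      exact And.imp_right fun h => (congrFun h i : D i ⬝ᵥ r = 0)
  calc _ ≤ _ := card_le_card hsub
    _ ≤ S.card ^ (Fintype.card (Fin n) - 1) := card_filter_dotProduct_eq_zero_le hi S
    _ = s ^ (n - 1) := by rw [hs, Fintype.card_fin]

/-- **Freivalds' lemma, counting form.** If `D` is a nonzero `n × n` matrix over a
field `F` and `S ⊆ F` is a nonempty finite set with `|S| = s`, then the number of
vectors `r ∈ Sⁿ` with `D · r = 0` is at most `s^(n−1)`. -/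
theorem freivalds_counting
    (F : Type*) [Field F] [DecidableEq F]
    (n : ℕ) (hn : 0 < n)
    (D : Matrix (Fin n) (Fin n) F) (hD : D ≠ 0)
    (S : Finset F) (hS : S.Nonempty) (s : ℕ) (hs : S.card = s) :
    ((Fintype.piFinset fun _ : Fin n => S).filter
        fun r => D.mulVec r = 0).card ≤ s ^ (n - 1) :=
  freivalds_counting_general F n D hD S s hs
end

section
/- Let F be a field, n a positive integer, and let A, B, C be n × n matrices over F with A·B ≠ C. Let S be a nonempty finite subset of F with |S| = s, and draw r uniformly from Sⁿ. Then the probability that A·(B·r) = C·r is at most 1/s. -/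
/-!
If `A·B ≠ C`, some row `d` of `A·B - C` is nonzero, and `A·(B·r) = C·r` forces `d ⬝ᵥ r = 0`.
This is the vanishing of a nonzero polynomial of total degree one at `r`, which by the
Schwartz–Zippel lemma happens for at most a `1/|S|` fraction of the points of `Sⁿ`.
-/

open scoped ENNReal

open Finset Fintype Matrix MvPolynomial

namespace MvPolynomial

variable {σ R : Type*} [Fintype σ] [CommSemiring R]

noncomputable def linearForm (d : σ → R) : MvPolynomial σ R :=
  ∑ k, d k • X k

@[simp]
lemma eval_linearForm (d r : σ → R) : eval r (linearForm d) = d ⬝ᵥ r := by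
  simp [linearForm, dotProduct]

lemma totalDegree_linearForm_le (d : σ → R) : (linearForm d).totalDegree ≤ 1 :=
  (totalDegree_finsetSum _ _).trans <| Finset.sup_le fun k _ =>
    (totalDegree_smul_le _ _).trans <| by
      rcases subsingleton_or_nontrivial R with _ | _
      · simp [Subsingleton.elim (X k : MvPolynomial σ R) 0]
      · rw [totalDegree_X]

lemma linearForm_ne_zero {d : σ → R} (hd : d ≠ 0) : linearForm d ≠ 0 := by
  classical
  obtain ⟨j, hj⟩ := Function.ne_iff.1 hd
  intro h
  have hdj := (eval_linearForm d (Pi.single j 1)).trans (dotProduct_single_one d j)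
  exact hj (by simpa [h] using hdj.symm)

end MvPolynomial

lemma card_filter_dotProduct_eq_zero_mul_card_le {R : Type*} [CommRing R] [IsDomain R]
    [DecidableEq R] {n : ℕ} {d : Fin n → R} (hd : d ≠ 0) (S : Finset R) :
    #{r ∈ piFinset fun _ ↦ S | d ⬝ᵥ r = 0} * #S ≤ #S ^ n := by
  rcases S.eq_empty_or_nonempty with rfl | hS
  · simp
  have hSZ := schwartz_zippel_totalDegree (linearForm_ne_zero hd) S
  simp only [eval_linearForm] at hSZ
  have hdeg : ((linearForm d).totalDegree : ℚ≥0) / #S ≤ 1 / #S := by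
    gcongr
    exact_mod_cast totalDegree_linearForm_le d
  have hprob := hSZ.trans hdeg
  rw [div_le_div_iff₀ (by positivity) (by positivity), one_mul] at hprob
  exact_mod_cast hprob

lemma PMF.toOuterMeasure_uniformOfFinset_le_one_div {α : Type*} {t : Finset α}
    (ht : t.Nonempty) {E : Set α} [DecidablePred (· ∈ E)] {k : ℕ}
    (h : #{x ∈ t | x ∈ E} * k ≤ #t) :
    (PMF.uniformOfFinset t ht).toOuterMeasure E ≤ 1 / k := by
  have ht₀ : (#t : ℝ≥0∞) ≠ 0 := by simpa using ht.card_pos.ne'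
  rw [PMF.toOuterMeasure_uniformOfFinset_apply, ENNReal.div_le_iff ht₀ (ENNReal.natCast_ne_top _),
    one_div, mul_comm, ← div_eq_mul_inv,
    ENNReal.le_div_iff_mul_le (Or.inr ht₀) (Or.inl (ENNReal.natCast_ne_top _))]
  norm_cast
  convert h

theorem freivalds_check_general
    (F : Type*) [Field F] [DecidableEq F]
    (n : ℕ)
    (A B C : Matrix (Fin n) (Fin n) F) (hABC : A * B ≠ C)
    (S : Finset F) (hS : S.Nonempty) (s : ℕ) (hs : S.card = s) :
    (PMF.uniformOfFinset (Fintype.piFinset fun _ : Fin n => S)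
          (Fintype.piFinset_nonempty.mpr fun _ => hS)).toOuterMeasure
        {r | A.mulVec (B.mulVec r) = C.mulVec r} ≤ 1 / (s : ℝ≥0∞) := by
  obtain ⟨i, hi⟩ : ∃ i, (A * B - C) i ≠ 0 := Function.ne_iff.1 (sub_ne_zero.2 hABC)
  have hevent : {r | A *ᵥ B *ᵥ r = C *ᵥ r} ⊆ {r | (A * B - C) i ⬝ᵥ r = 0} := fun r hr => by
    have hker : (A * B - C) *ᵥ r = 0 := by rw [sub_mulVec, ← mulVec_mulVec, hr.out, sub_self]
    exact congrFun hker i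
  refine (PMF.toOuterMeasure_mono _ (Set.inter_subset_left.trans hevent)).trans ?_
  apply PMF.toOuterMeasure_uniformOfFinset_le_one_div
  simpa [card_piFinset_const, hs] using card_filter_dotProduct_eq_zero_mul_card_le hi S

/-- **Freivalds' check.** If `A·B ≠ C` for `n × n` matrices over a field `F`, and `r`
is drawn uniformly from `Sⁿ` for a nonempty finite `S ⊆ F` with `|S| = s`, then the
probability that `A·(B·r) = C·r` is at most `1/s`. -/
theorem freivalds_check
    (F : Type*) [Field F] [DecidableEq F]
    (n : ℕ) (hn : 0 < n)
    (A B C : Matrix (Fin n) (Fin n) F) (hABC : A * B ≠ C)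
    (S : Finset F) (hS : S.Nonempty) (s : ℕ) (hs : S.card = s) :
    (PMF.uniformOfFinset (Fintype.piFinset fun _ : Fin n => S)
          (Fintype.piFinset_nonempty.mpr fun _ => hS)).toOuterMeasure
        {r | A.mulVec (B.mulVec r) = C.mulVec r} ≤ 1 / (s : ℝ≥0∞) :=
  freivalds_check_general F n A B C hABC S hS s hs
end

section
/- Let F be a field, n a positive integer, and let A, B, C be n × n matrices over F with A·B ≠ C. Let S be a nonempty finite subset of F with |S| = s, and let k be a positive integer. If k random vectors r₁, …, r_k are drawn independently and uniformly from Sⁿ, then the probability that A·(B·r_j) = C·r_j holds for every j = 1, …, k is at most 1/s^k. -/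
open scoped ENNReal

/-!
If `A * B ≠ C`, then `D = A * B - C` has a nonzero row `v`, and a single check can only
pass when `r` lies on the hyperplane `v ⬝ᵥ r = 0`. Solving for a coordinate where `v` does
not vanish shows that at most a `1 / |S|` fraction of `Sⁿ` lies on that hyperplane, and the
`k` independent checks multiply these fractions.
-/

open Finset Matrix

section Counting

variable {ι R : Type*} [Fintype ι] [DecidableEq ι] [Ring R] [NoZeroDivisors R]
  [DecidableEq R]

/-- On the hyperplane `v ⬝ᵥ r = 0` with `v j₀ ≠ 0`, the coordinate `r j₀` is determined by the
others, so overwriting it injects `hyperplane × S` into `Sⁿ`. -/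
theorem card_filter_dotProduct_eq_zero_mul_card_le_s10 {v : ι → R} (hv : v ≠ 0)
    (S : Finset R) :
    #{r ∈ Fintype.piFinset fun _ => S | v ⬝ᵥ r = 0} * #S ≤
      #(Fintype.piFinset fun _ : ι => S) := by
  obtain ⟨j₀, hj₀⟩ := Function.ne_iff.mp hv
  rw [← card_product]
  refine card_le_card_of_injOn (fun p => Function.update p.1 j₀ p.2) ?_ ?_
  · rintro ⟨r, a⟩ hra
    simp only [coe_product, Set.mem_prod, mem_coe, mem_filter, Fintype.mem_piFinset] at hra ⊢
    intro i
    rcases eq_or_ne i j₀ with rfl | hi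
    · simpa using hra.2
    · simpa [hi] using hra.1.1 i
  · rintro ⟨r, a⟩ hra ⟨r', a'⟩ hra' h
    simp only [coe_product, Set.mem_prod, mem_coe, mem_filter] at hra hra'
    have ha : a = a' := by simpa using congrFun h j₀
    have hoff : ∀ i ≠ j₀, r i = r' i := fun i hi => by simpa [hi] using congrFun h i
    have hdiff : r - r' = Pi.single j₀ (r j₀ - r' j₀) := by
      funext i
      rcases eq_or_ne i j₀ with rfl | hi
      · simp
      · simp [hi, hoff i hi]
    have hj : v j₀ * (r j₀ - r' j₀) = 0 := by
      rw [← dotProduct_single, ← hdiff, dotProduct_sub, hra.1.2, hra'.1.2, sub_self]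
    have hr : r = r' := by
      rw [← sub_eq_zero, hdiff, (mul_eq_zero.mp hj).resolve_left hj₀, Pi.single_zero]
    rw [hr, ha]

theorem card_filter_mulVec_eq_zero_mul_card_le {m : Type*} [Fintype m] {M : Matrix m ι R}
    (hM : M ≠ 0) (S : Finset R) :
    #{r ∈ Fintype.piFinset fun _ => S | M *ᵥ r = 0} * #S ≤
      #(Fintype.piFinset fun _ : ι => S) := by
  obtain ⟨i, hi⟩ := Function.ne_iff.mp hM
  refine le_trans (Nat.mul_le_mul_right _ (card_le_card ?_))
    (card_filter_dotProduct_eq_zero_mul_card_le_s10 hi S)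
  exact monotone_filter_right _ fun r _ hr => congrFun hr i

end Counting

theorem ENNReal.natCast_div_le_one_div_of_mul_le {a b c : ℕ} (h : a * b ≤ c) :
    (a : ℝ≥0∞) / c ≤ 1 / b := by
  rcases eq_or_ne b 0 with rfl | hb
  · simp
  rw [one_div]
  refine ENNReal.div_le_of_le_mul ?_
  rw [← ENNReal.div_eq_inv_mul,
    ENNReal.le_div_iff_mul_le (.inl (mod_cast hb)) (.inl (natCast_ne_top b))]
  exact_mod_cast h

theorem PMF.toOuterMeasure_uniformOfFinset_piFinset_forall_le {α ι : Type*} [Fintype ι]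
    [DecidableEq ι] {T : Finset α} (hT : (Fintype.piFinset fun _ : ι => T).Nonempty)
    (p : α → Prop) [DecidablePred p] {s : ℕ} (hp : #{x ∈ T | p x} * s ≤ #T) :
    (uniformOfFinset _ hT).toOuterMeasure {r | ∀ j, p (r j)} ≤
      1 / (s : ℝ≥0∞) ^ Fintype.card ι := by
  rw [toOuterMeasure_uniformOfFinset_apply]
  refine (ENNReal.natCast_div_le_one_div_of_mul_le (b := s ^ Fintype.card ι) ?_).trans_eq
    (by push_cast; rfl)
  calc _ ≤ #(Fintype.piFinset fun _ : ι => {x ∈ T | p x}) * s ^ Fintype.card ι := by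
        gcongr
        intro r hr
        simpa [forall_and] using hr
    _ = (#{x ∈ T | p x} * s) ^ Fintype.card ι := by simp [mul_pow]
    _ ≤ #(Fintype.piFinset fun _ : ι => T) := by simpa using Nat.pow_le_pow_left hp _

theorem freivalds_check_repeated_general
    (F : Type*) [Field F]
    (n : ℕ) (k : ℕ)
    (A B C : Matrix (Fin n) (Fin n) F) (hABC : A * B ≠ C)
    (S : Finset F) (hS : S.Nonempty) (s : ℕ) (hs : S.card = s) :
    (PMF.uniformOfFinset
          (Fintype.piFinset fun _ : Fin k => Fintype.piFinset fun _ : Fin n => S)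
          (Fintype.piFinset_nonempty.mpr fun _ =>
            Fintype.piFinset_nonempty.mpr fun _ => hS)).toOuterMeasure
        {r | ∀ j : Fin k, A.mulVec (B.mulVec (r j)) = C.mulVec (r j)} ≤
      1 / (s : ℝ≥0∞) ^ k := by
  classical
  subst hs
  have hcheck (x : Fin n → F) : A *ᵥ (B *ᵥ x) = C *ᵥ x ↔ (A * B - C) *ᵥ x = 0 := by
    rw [sub_mulVec, mulVec_mulVec, sub_eq_zero]
  simp_rw [hcheck]
  exact (PMF.toOuterMeasure_uniformOfFinset_piFinset_forall_le _ _
    (card_filter_mulVec_eq_zero_mul_card_le (sub_ne_zero.mpr hABC) S)).trans_eq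
    (by rw [Fintype.card_fin])

/-- **Repeated Freivalds' check.** If `A·B ≠ C` for `n × n` matrices over a field `F`,
and `k` random vectors `r₁, …, r_k` are drawn independently and uniformly from `Sⁿ`
(`S ⊆ F` nonempty finite, `|S| = s`), then the probability that `A·(B·r_j) = C·r_j`
holds for every `j` is at most `1/s^k`. -/
theorem freivalds_check_repeated
    (F : Type*) [Field F] [DecidableEq F]
    (n : ℕ) (hn : 0 < n) (k : ℕ) (hk : 0 < k)
    (A B C : Matrix (Fin n) (Fin n) F) (hABC : A * B ≠ C)
    (S : Finset F) (hS : S.Nonempty) (s : ℕ) (hs : S.card = s) :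
    (PMF.uniformOfFinset
          (Fintype.piFinset fun _ : Fin k => Fintype.piFinset fun _ : Fin n => S)
          (Fintype.piFinset_nonempty.mpr fun _ =>
            Fintype.piFinset_nonempty.mpr fun _ => hS)).toOuterMeasure
        {r | ∀ j : Fin k, A.mulVec (B.mulVec (r j)) = C.mulVec (r j)} ≤
      1 / (s : ℝ≥0∞) ^ k :=
  freivalds_check_repeated_general F n k A B C hABC S hS s hs
end
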